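/- arXiv:2108.01638 — 4 statements merged into one kernel-verified Lean document; each statement's English description precedes it below -/
import Mathlib

section
/- Let Y be a Banach lattice. If for every 0 < ε < 1 there exists η > 0 such that for all u, v ∈ Y with 0 ≤ u ≤ v and ‖v − u‖ > (1 − η)‖v‖ one has ‖u‖ ≤ ε‖v‖, then Y is uniformly monotone: for every 0 < ε < 1 there is 0 < δ ≤ ε such that x, y ∈ Y⁺ with ‖x‖ = 1 and ‖x + y‖ ≤ 1 + δ implies ‖y‖ ≤ ε. -/
/-!
Apply the hypothesis with `ε / 2` to `u = y ≤ v = x + y`. Since `‖v - u‖ = ‖x‖ = 1` and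
`‖v‖ ≤ 1 + δ`, choosing `δ < η` gives `‖v - u‖ > (1 - η) ‖v‖`, so
`‖y‖ ≤ (ε / 2) ‖x + y‖ ≤ (ε / 2)(1 + δ) ≤ ε` as soon as `δ ≤ 1`.
-/

lemma one_sub_mul_lt_one_of_le_one_add {η δ t : ℝ} (hδ : 0 ≤ δ) (hδη : δ < η)
    (ht : 0 ≤ t) (htδ : t ≤ 1 + δ) : (1 - η) * t < 1 := by
  rcases le_total η 1 with hη1 | hη1
  · nlinarith [mul_le_mul_of_nonneg_left htδ (sub_nonneg.2 hη1)]
  · nlinarith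

lemma norm_le_mul_norm_add_of_norm_eq_one {Y : Type*} [NormedAddCommGroup Y] [PartialOrder Y]
    [IsOrderedAddMonoid Y] {c η δ : ℝ}
    (hη : ∀ u v : Y, 0 ≤ u → u ≤ v → ‖v - u‖ > (1 - η) * ‖v‖ → ‖u‖ ≤ c * ‖v‖)
    (hδ : 0 ≤ δ) (hδη : δ < η) {x y : Y} (hx : 0 ≤ x) (hy : 0 ≤ y) (hx1 : ‖x‖ = 1)
    (hxy : ‖x + y‖ ≤ 1 + δ) :
    ‖y‖ ≤ c * ‖x + y‖ := by
  refine hη y (x + y) hy (le_add_of_nonneg_left hx) ?_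
  rw [add_sub_cancel_right, hx1]
  exact one_sub_mul_lt_one_of_le_one_add hδ hδη (norm_nonneg _) hxy

theorem stmt_2_general {Y : Type*} [NormedAddCommGroup Y] [Lattice Y] [IsOrderedAddMonoid Y]
    (h : ∀ ε : ℝ, 0 < ε → ε < 1 → ∃ η : ℝ, 0 < η ∧
      ∀ u v : Y, 0 ≤ u → u ≤ v → ‖v - u‖ > (1 - η) * ‖v‖ → ‖u‖ ≤ ε * ‖v‖) :
    ∀ ε : ℝ, 0 < ε → ε < 1 → ∃ δ : ℝ, 0 < δ ∧ δ ≤ ε ∧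
      ∀ x y : Y, 0 ≤ x → 0 ≤ y → ‖x‖ = 1 → ‖x + y‖ ≤ 1 + δ → ‖y‖ ≤ ε := by
  intro ε hε hε1
  obtain ⟨η, hη, hmono⟩ := h (ε / 2) (by linarith) (by linarith)
  refine ⟨min ε (η / 2), by positivity, min_le_left _ _, fun x y hx hy hx1 hxy => ?_⟩
  have hδη : min ε (η / 2) < η := (min_le_right _ _).trans_lt (half_lt_self hη)
  calc ‖y‖ ≤ ε / 2 * ‖x + y‖ :=
        norm_le_mul_norm_add_of_norm_eq_one hmono (by positivity) hδη hx hy hx1 hxy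
    _ ≤ ε / 2 * (1 + ε) := by gcongr; exact hxy.trans (by gcongr; exact min_le_left _ _)
    _ ≤ ε := by nlinarith

/-- The homogeneous monotonicity condition implies uniform monotonicity. -/
theorem stmt_2 {Y : Type*} [NormedAddCommGroup Y] [Lattice Y] [IsOrderedAddMonoid Y] [HasSolidNorm Y] [CompleteSpace Y]
    (h : ∀ ε : ℝ, 0 < ε → ε < 1 → ∃ η : ℝ, 0 < η ∧
      ∀ u v : Y, 0 ≤ u → u ≤ v → ‖v - u‖ > (1 - η) * ‖v‖ → ‖u‖ ≤ ε * ‖v‖) :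
    ∀ ε : ℝ, 0 < ε → ε < 1 → ∃ δ : ℝ, 0 < δ ∧ δ ≤ ε ∧
      ∀ x y : Y, 0 ≤ x → 0 ≤ y → ‖x‖ = 1 → ‖x + y‖ ≤ 1 + δ → ‖y‖ ≤ ε :=
  stmt_2_general h
end

section
/- Let L be a locally compact Hausdorff topological space, Y a Banach lattice, S₁ and S₂ positive bounded linear operators from C₀(L) to Y, and g₁, g₂ nonnegative functions in C₀(L). Then the operator U : C₀(L) → Y defined by U(f) = S₁(f·g₁) + S₂(f·g₂) is bounded with operator norm ‖U‖ = ‖S₁(g₁) + S₂(g₂)‖. -/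
/-!
A positive operator `S` satisfies `|S f| ≤ S g` whenever `|f| ≤ g` pointwise, so
`|U f| ≤ S₁ g₁ + S₂ g₂` for `‖f‖ ≤ 1` and the solid norm gives `‖U‖ ≤ ‖S₁ g₁ + S₂ g₂‖`.
Conversely, `e_δ = min 1 ((g₁ + g₂) / δ)` has norm at most `1` and `‖e_δ gᵢ - gᵢ‖ ≤ δ`,
so `U e_δ → S₁ g₁ + S₂ g₂` as `δ → 0⁺`, which gives the reverse inequality.
-/

open scoped ZeroAtInfty
open Filter Topology

namespace ZeroAtInftyContinuousMap

section Norm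

variable {α β : Type*} [TopologicalSpace α] [SeminormedAddCommGroup β]

theorem norm_coe_le_norm (f : C₀(α, β)) (x : α) : ‖f x‖ ≤ ‖f‖ :=
  f.toBCF.norm_coe_le_norm x

theorem norm_le {f : C₀(α, β)} {C : ℝ} (hC : 0 ≤ C) : ‖f‖ ≤ C ↔ ∀ x, ‖f x‖ ≤ C :=
  BoundedContinuousFunction.norm_le hC

end Norm

section ApproxUnit

variable {α : Type*} [TopologicalSpace α]

noncomputable def approxUnit (g : C₀(α, ℝ)) (δ : ℝ) : C₀(α, ℝ) where
  toFun t := min 1 (g t / δ)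
  continuous_toFun := continuous_const.min (g.continuous.div_const δ)
  zero_at_infty' := by
    simpa using (tendsto_const_nhds (x := (1 : ℝ))).min ((zero_at_infty g).div_const δ)

theorem approxUnit_apply (g : C₀(α, ℝ)) (δ : ℝ) (t : α) :
    approxUnit g δ t = min 1 (g t / δ) :=
  rfl

theorem norm_approxUnit_le_one {g : C₀(α, ℝ)} (hg : ∀ t, 0 ≤ g t) {δ : ℝ} (hδ : 0 ≤ δ) :
    ‖approxUnit g δ‖ ≤ 1 := by
  refine (norm_le zero_le_one).2 fun t => ?_
  rw [approxUnit_apply, Real.norm_eq_abs,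
    abs_of_nonneg (le_min zero_le_one (div_nonneg (hg t) hδ))]
  exact min_le_left _ _

theorem norm_approxUnit_mul_sub_le {g h : C₀(α, ℝ)} (hh : ∀ t, 0 ≤ h t) (hhg : ∀ t, h t ≤ g t)
    {δ : ℝ} (hδ : 0 < δ) : ‖approxUnit g δ * h - h‖ ≤ δ := by
  refine (norm_le hδ.le).2 fun t => ?_
  rw [sub_apply, mul_apply, approxUnit_apply, Real.norm_eq_abs]
  rcases le_or_gt δ (g t) with hgδ | hgδ
  · rw [min_eq_left ((one_le_div hδ).2 hgδ)]
    simpa using hδ.le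
  · -- here `0 ≤ h t ≤ g t < δ`
    have hm₀ : 0 ≤ min 1 (g t / δ) :=
      le_min zero_le_one (div_nonneg ((hh t).trans (hhg t)) hδ.le)
    have hm₁ : min 1 (g t / δ) ≤ 1 := min_le_left _ _
    rw [abs_le]
    constructor <;> nlinarith [hh t, hhg t]

theorem tendsto_approxUnit_mul {g h : C₀(α, ℝ)} (hh : ∀ t, 0 ≤ h t) (hhg : ∀ t, h t ≤ g t) :
    Tendsto (fun δ => approxUnit g δ * h) (𝓝[>] 0) (𝓝 h) := by
  rw [tendsto_iff_norm_sub_tendsto_zero]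
  exact squeeze_zero' (Eventually.of_forall fun _ => norm_nonneg _)
    (eventually_nhdsWithin_of_forall fun _ hδ => norm_approxUnit_mul_sub_le hh hhg hδ)
    (tendsto_nhdsWithin_of_tendsto_nhds tendsto_id)

end ApproxUnit

end ZeroAtInftyContinuousMap

open ZeroAtInftyContinuousMap

section Positive

variable {L Y F : Type*} [TopologicalSpace L] [AddCommGroup Y] [Lattice Y] [IsOrderedAddMonoid Y]
  [FunLike F C₀(L, ℝ) Y] [AddMonoidHomClass F C₀(L, ℝ) Y] {S : F}

theorem abs_map_le_of_abs_le (hS : ∀ f : C₀(L, ℝ), (∀ t, 0 ≤ f t) → 0 ≤ S f) {f g : C₀(L, ℝ)}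
    (hfg : ∀ t, |f t| ≤ g t) : |S f| ≤ S g := by
  have hsub : 0 ≤ S (g - f) := hS _ fun t => by
    rw [ZeroAtInftyContinuousMap.sub_apply, sub_nonneg]
    exact le_of_abs_le (hfg t)
  have hadd : 0 ≤ S (f + g) := hS _ fun t => by
    rw [ZeroAtInftyContinuousMap.add_apply, ← neg_le_iff_add_nonneg]
    exact neg_le_of_abs_le (hfg t)
  rw [map_sub, sub_nonneg] at hsub
  rw [map_add] at hadd
  exact abs_le'.2 ⟨hsub, neg_le_iff_add_nonneg'.2 hadd⟩

theorem abs_map_mul_le (hS : ∀ f : C₀(L, ℝ), (∀ t, 0 ≤ f t) → 0 ≤ S f) {f g : C₀(L, ℝ)}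
    (hf : ‖f‖ ≤ 1) (hg : ∀ t, 0 ≤ g t) : |S (f * g)| ≤ S g := by
  refine abs_map_le_of_abs_le hS fun t => ?_
  rw [ZeroAtInftyContinuousMap.mul_apply, abs_mul, abs_of_nonneg (hg t)]
  exact mul_le_of_le_one_left (hg t) ((f.norm_coe_le_norm t).trans hf)

end Positive

theorem stmt_3_general {L : Type*} [TopologicalSpace L]
    {Y : Type*} [NormedAddCommGroup Y] [Lattice Y] [HasSolidNorm Y] [IsOrderedAddMonoid Y] [NormedSpace ℝ Y]
    (S₁ S₂ : C₀(L, ℝ) →L[ℝ] Y)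
    (hS₁ : ∀ f : C₀(L, ℝ), (∀ t, 0 ≤ f t) → 0 ≤ S₁ f)
    (hS₂ : ∀ f : C₀(L, ℝ), (∀ t, 0 ≤ f t) → 0 ≤ S₂ f)
    (g₁ g₂ : C₀(L, ℝ)) (hg₁ : ∀ t, 0 ≤ g₁ t) (hg₂ : ∀ t, 0 ≤ g₂ t)
    (U : C₀(L, ℝ) →L[ℝ] Y) (hU : ∀ f : C₀(L, ℝ), U f = S₁ (f * g₁) + S₂ (f * g₂)) :
    ‖U‖ = ‖S₁ g₁ + S₂ g₂‖ := by
  have hpos : 0 ≤ S₁ g₁ + S₂ g₂ := add_nonneg (hS₁ g₁ hg₁) (hS₂ g₂ hg₂)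
  refine le_antisymm (U.opNorm_le_of_unit_norm (norm_nonneg _) fun f hf => ?_) ?_
  · have hUf : |U f| ≤ |S₁ g₁ + S₂ g₂| := by
      rw [hU, abs_of_nonneg hpos]
      exact (abs_add_le _ _).trans
        (add_le_add (abs_map_mul_le hS₁ hf.le hg₁) (abs_map_mul_le hS₂ hf.le hg₂))
    exact HasSolidNorm.solid hUf
  · have hlim : Tendsto (fun δ => U (approxUnit (g₁ + g₂) δ)) (𝓝[>] 0)
        (𝓝 (S₁ g₁ + S₂ g₂)) := by
      simp_rw [hU]
      exact ((S₁.continuous.tendsto g₁).comp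
          (tendsto_approxUnit_mul hg₁ fun t => by simp [hg₂ t])).add
        ((S₂.continuous.tendsto g₂).comp (tendsto_approxUnit_mul hg₂ fun t => by simp [hg₁ t]))
    have hg : ∀ t, 0 ≤ (g₁ + g₂) t := fun t => add_nonneg (hg₁ t) (hg₂ t)
    refine le_of_tendsto hlim.norm (eventually_nhdsWithin_of_forall fun δ hδ => ?_)
    simpa using U.le_opNorm_of_le (norm_approxUnit_le_one hg hδ.le)

/-- For positive operators `S₁, S₂ : C₀(L) → Y` and nonnegative `g₁, g₂ ∈ C₀(L)`, the operator
`U f = S₁ (f·g₁) + S₂ (f·g₂)` has norm `‖S₁ g₁ + S₂ g₂‖`. -/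
theorem stmt_3 {L : Type*} [TopologicalSpace L] [LocallyCompactSpace L] [T2Space L]
    {Y : Type*} [NormedAddCommGroup Y] [Lattice Y] [HasSolidNorm Y] [IsOrderedAddMonoid Y] [NormedSpace ℝ Y] [CompleteSpace Y]
    (S₁ S₂ : C₀(L, ℝ) →L[ℝ] Y)
    (hS₁ : ∀ f : C₀(L, ℝ), (∀ t, 0 ≤ f t) → 0 ≤ S₁ f)
    (hS₂ : ∀ f : C₀(L, ℝ), (∀ t, 0 ≤ f t) → 0 ≤ S₂ f)
    (g₁ g₂ : C₀(L, ℝ)) (hg₁ : ∀ t, 0 ≤ g₁ t) (hg₂ : ∀ t, 0 ≤ g₂ t)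
    (U : C₀(L, ℝ) →L[ℝ] Y) (hU : ∀ f : C₀(L, ℝ), U f = S₁ (f * g₁) + S₂ (f * g₂)) :
    ‖U‖ = ‖S₁ g₁ + S₂ g₂‖ :=
  stmt_3_general S₁ S₂ hS₁ hS₂ g₁ g₂ hg₁ hg₂ U hU
end

section
/- Let L be a locally compact Hausdorff space with at least two points, Y a Banach lattice, and u, v ∈ Y with 0 ≤ u ≤ v and ‖v‖ = 1. Choose t₁, t₂ ∈ L and f₁, f₂ ∈ C₀(L) with 0 ≤ fᵢ ≤ 1, fᵢ(tᵢ) = 1 and disjoint supports. Then the operator S : C₀(L) → Y defined by S(f) = f(t₁)·(v − u) + f(t₂)·u is a positive bounded linear operator with ‖S‖ = 1, and ‖S(f₁)‖ = ‖v − u‖. -/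
/-!
For `‖f‖ ≤ 1` the positivity of `v - u` and `u` gives `|S f| ≤ |f t₁| • (v - u) + |f t₂| • u ≤ v`,
so the solid norm yields `‖S f‖ ≤ ‖v‖ = 1`. Disjointness of the supports gives `f₂ t₁ = f₁ t₂ = 0`,
hence `S (f₁ + f₂) = v` with `‖f₁ + f₂‖ ≤ 1`, and `S f₁ = v - u`.
-/

open scoped ZeroAtInfty
open Filter Topology

lemma nonneg_of_two_pow_nsmul_nonneg {Y : Type*} [Lattice Y] [AddCommGroup Y]
    [IsOrderedAddMonoid Y] (k : ℕ) {a : Y} (h : 0 ≤ 2 ^ k • a) : 0 ≤ a := by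
  induction k generalizing a with
  | zero => simpa using h
  | succ k ih =>
    rw [pow_succ', mul_nsmul] at h
    exact nsmul_two_semiclosed (ih h)

namespace HasSolidNorm

variable {Y : Type*} [NormedAddCommGroup Y] [Lattice Y] [HasSolidNorm Y] [IsOrderedAddMonoid Y]
  [NormedSpace ℝ Y]

/- The order is not assumed compatible with real scalars: positivity is obtained for dyadic `c`
by halving in the lattice-ordered group, and passes to the limit since the positive cone is closed. -/
lemma smul_nonneg {c : ℝ} {w : Y} (hc : 0 ≤ c) (hw : 0 ≤ w) : 0 ≤ c • w := by
  have hclosed : IsClosed {r : ℝ | 0 ≤ r • w} :=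
    isClosed_nonneg.preimage (continuous_id.smul continuous_const)
  have hdyadic (m k : ℕ) : 0 ≤ ((m : ℝ) / 2 ^ k) • w := by
    refine nonneg_of_two_pow_nsmul_nonneg k ?_
    rw [← Nat.cast_smul_eq_nsmul ℝ, smul_smul]
    push_cast
    rw [mul_div_cancel₀ _ (by positivity), Nat.cast_smul_eq_nsmul]
    exact nsmul_nonneg hw m
  have hlim : Tendsto (fun k : ℕ ↦ (⌊c * 2 ^ k⌋₊ : ℝ) / 2 ^ k) atTop (𝓝 c) :=
    (tendsto_nat_floor_mul_div_atTop hc).comp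
      (tendsto_pow_atTop_atTop_of_one_lt one_lt_two)
  exact hclosed.mem_of_tendsto hlim (Eventually.of_forall fun k ↦ hdyadic _ k)

instance isOrderedModule : IsOrderedModule ℝ Y :=
  .of_smul_nonneg fun _ hc _ hw ↦ smul_nonneg hc hw

end HasSolidNorm

lemma abs_smul_le_abs_smul {Y : Type*} [Lattice Y] [AddCommGroup Y] [IsOrderedAddMonoid Y]
    [Module ℝ Y] [IsOrderedModule ℝ Y] (a : ℝ) {w : Y} (hw : 0 ≤ w) : |a • w| ≤ |a| • w :=
  abs_le'.2 ⟨smul_le_smul_of_nonneg_right (le_abs_self a) hw,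
    neg_smul a w ▸ smul_le_smul_of_nonneg_right (neg_le_abs a) hw⟩

lemma norm_smul_add_smul_le_of_abs_le {Y : Type*} [NormedAddCommGroup Y] [Lattice Y]
    [HasSolidNorm Y] [IsOrderedAddMonoid Y] [NormedSpace ℝ Y]
    {a b r : ℝ} {w₁ w₂ : Y} (hw₁ : 0 ≤ w₁) (hw₂ : 0 ≤ w₂) (ha : |a| ≤ r) (hb : |b| ≤ r) :
    ‖a • w₁ + b • w₂‖ ≤ r * ‖w₁ + w₂‖ := by
  have hr : 0 ≤ r := (abs_nonneg a).trans ha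
  have habs : |a • w₁ + b • w₂| ≤ |r • (w₁ + w₂)| :=
    calc |a • w₁ + b • w₂| ≤ |a • w₁| + |b • w₂| := abs_add_le _ _
      _ ≤ |a| • w₁ + |b| • w₂ :=
        add_le_add (abs_smul_le_abs_smul a hw₁) (abs_smul_le_abs_smul b hw₂)
      _ ≤ r • w₁ + r • w₂ :=
        add_le_add (smul_le_smul_of_nonneg_right ha hw₁) (smul_le_smul_of_nonneg_right hb hw₂)
      _ = |r • (w₁ + w₂)| := by
        rw [← smul_add, abs_of_nonneg (smul_nonneg hr (add_nonneg hw₁ hw₂))]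
  calc ‖a • w₁ + b • w₂‖ ≤ ‖r • (w₁ + w₂)‖ := norm_le_norm_of_abs_le_abs habs
    _ = r * ‖w₁ + w₂‖ := by rw [norm_smul, Real.norm_of_nonneg hr]

namespace ZeroAtInftyContinuousMap

variable {L : Type*} [TopologicalSpace L]

lemma abs_apply_le_norm (f : C₀(L, ℝ)) (t : L) : |f t| ≤ ‖f‖ :=
  norm_toBCF_eq_norm (f := f) ▸ f.toBCF.norm_coe_le_norm t

lemma norm_add_le_one_of_mul_eq_zero {f g : C₀(L, ℝ)} (hf : ∀ t, 0 ≤ f t ∧ f t ≤ 1)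
    (hg : ∀ t, 0 ≤ g t ∧ g t ≤ 1) (hfg : f * g = 0) : ‖f + g‖ ≤ 1 := by
  rw [← norm_toBCF_eq_norm, BoundedContinuousFunction.norm_le zero_le_one]
  intro t
  have hprod : f t * g t = 0 := by simpa using DFunLike.congr_fun hfg t
  obtain ⟨hf₀, hf₁⟩ := hf t
  obtain ⟨hg₀, hg₁⟩ := hg t
  simp only [toBCF_apply, coe_add, Pi.add_apply, Real.norm_eq_abs, abs_le]
  rcases mul_eq_zero.1 hprod with h | h <;> constructor <;> linarith

end ZeroAtInftyContinuousMap

theorem stmt_13_general {L : Type*} [TopologicalSpace L]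
    {Y : Type*} [NormedAddCommGroup Y] [Lattice Y] [HasSolidNorm Y] [IsOrderedAddMonoid Y] [NormedSpace ℝ Y]
    (u v : Y) (hu : 0 ≤ u) (huv : u ≤ v) (hv : ‖v‖ = 1)
    (t₁ t₂ : L) (f₁ f₂ : C₀(L, ℝ))
    (hf₁ : ∀ t, 0 ≤ f₁ t ∧ f₁ t ≤ 1) (hf₂ : ∀ t, 0 ≤ f₂ t ∧ f₂ t ≤ 1)
    (hf₁t₁ : f₁ t₁ = 1) (hf₂t₂ : f₂ t₂ = 1) (hdisj : f₁ * f₂ = 0)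
    (S : C₀(L, ℝ) →L[ℝ] Y) (hS : ∀ f : C₀(L, ℝ), S f = f t₁ • (v - u) + f t₂ • u) :
    (∀ f : C₀(L, ℝ), (∀ t, 0 ≤ f t) → 0 ≤ S f) ∧ ‖S‖ = 1 ∧ ‖S f₁‖ = ‖v - u‖ := by
  have hvu : 0 ≤ v - u := sub_nonneg.2 huv
  have hf₁t₂ : f₁ t₂ = 0 := by simpa [hf₂t₂] using DFunLike.congr_fun hdisj t₂
  have hf₂t₁ : f₂ t₁ = 0 := by simpa [hf₁t₁] using DFunLike.congr_fun hdisj t₁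
  have hSf₁ : S f₁ = v - u := by simp [hS, hf₁t₁, hf₁t₂]
  have hSf₁f₂ : S (f₁ + f₂) = v := by simp [hS, hf₁t₁, hf₁t₂, hf₂t₁, hf₂t₂]
  have hS_le : ‖S‖ ≤ 1 := S.opNorm_le_bound zero_le_one fun f ↦ by
    simpa [← hS, hv] using norm_smul_add_smul_le_of_abs_le hvu hu
      (f.abs_apply_le_norm t₁) (f.abs_apply_le_norm t₂)
  have hS_ge : 1 ≤ ‖S‖ :=
    calc 1 = ‖S (f₁ + f₂)‖ := by rw [hSf₁f₂, hv]
      _ ≤ ‖S‖ * ‖f₁ + f₂‖ := S.le_opNorm _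
      _ ≤ ‖S‖ := mul_le_of_le_one_right (norm_nonneg S)
          (ZeroAtInftyContinuousMap.norm_add_le_one_of_mul_eq_zero hf₁ hf₂ hdisj)
  refine ⟨fun f hf ↦ ?_, hS_le.antisymm hS_ge, by rw [hSf₁]⟩
  rw [hS]
  exact add_nonneg (smul_nonneg (hf t₁) hvu) (smul_nonneg (hf t₂) hu)

/-- Given `0 ≤ u ≤ v` with `‖v‖ = 1` in a Banach lattice `Y`, points `t₁, t₂` and functions
`f₁, f₂ ∈ C₀(L)` with `0 ≤ fᵢ ≤ 1`, `fᵢ tᵢ = 1` and disjoint supports, the operator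
`S f = f t₁ • (v - u) + f t₂ • u` is positive, has norm one, and `‖S f₁‖ = ‖v - u‖`. -/
theorem stmt_13 {L : Type*} [TopologicalSpace L] [LocallyCompactSpace L] [T2Space L]
    {Y : Type*} [NormedAddCommGroup Y] [Lattice Y] [HasSolidNorm Y] [IsOrderedAddMonoid Y] [NormedSpace ℝ Y] [CompleteSpace Y]
    (u v : Y) (hu : 0 ≤ u) (huv : u ≤ v) (hv : ‖v‖ = 1)
    (t₁ t₂ : L) (f₁ f₂ : C₀(L, ℝ))
    (hf₁ : ∀ t, 0 ≤ f₁ t ∧ f₁ t ≤ 1) (hf₂ : ∀ t, 0 ≤ f₂ t ∧ f₂ t ≤ 1)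
    (hf₁t₁ : f₁ t₁ = 1) (hf₂t₂ : f₂ t₂ = 1) (hdisj : f₁ * f₂ = 0)
    (S : C₀(L, ℝ) →L[ℝ] Y) (hS : ∀ f : C₀(L, ℝ), S f = f t₁ • (v - u) + f t₂ • u) :
    (∀ f : C₀(L, ℝ), (∀ t, 0 ≤ f t) → 0 ≤ S f) ∧ ‖S‖ = 1 ∧ ‖S f₁‖ = ‖v - u‖ :=
  stmt_13_general u v hu huv hv t₁ t₂ f₁ f₂ hf₁ hf₂ hf₁t₁ hf₂t₂ hdisj S hS
end

section
/- Let Y be a uniformly monotone Banach function space with modulus δ, let 0 < ε < 1, and let f₁, f₂ be nonnegative elements of Y with ‖f₁ + f₂‖ ≤ 1 and ‖f₁ − f₂‖ ≥ 1/(1 + δ(ε/3)). Then there exist nonnegative functions h₁, h₂ ∈ Y with disjoint supports such that ‖h₁ + h₂‖ = 1 and ‖hᵢ − fᵢ‖ < ε for i = 1, 2. -/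
/-!
Write `F = f₁ - f₂ = F⁺ - F⁻`. Then `f₁ = f₁ ⊓ f₂ + F⁺`, `f₂ = f₁ ⊓ f₂ + F⁻` and
`f₁ + f₂ = |F| + 2 (f₁ ⊓ f₂)`. Since `‖|F|‖ = ‖F‖ ≥ 1 / (1 + δ (ε / 3))` while `‖f₁ + f₂‖ ≤ 1`,
uniform monotonicity forces the common part `f₁ ⊓ f₂` to have norm at most `ε / 6`. The disjointly
supported `hᵢ` are `F⁺` and `F⁻` rescaled by `‖F‖⁻¹`, which moves them by at most
`1 - ‖F‖ ≤ δ (ε / 3)`.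
-/

open Function

section FunctionLattice

variable {Ω Y : Type*} [Lattice Y] [AddCommGroup Y] [Module ℝ Y] (ι : Y →ₗ[ℝ] (Ω → ℝ))

theorem posSMulMono_of_le_iff (horder : ∀ f g : Y, f ≤ g ↔ ∀ x, ι f x ≤ ι g x) :
    PosSMulMono ℝ Y :=
  PosSMulMono.lift ι (fun {_ _} => (horder _ _).symm) (map_smul ι)

theorem map_inf_of_le_iff_of_indicator (horder : ∀ f g : Y, f ≤ g ↔ ∀ x, ι f x ≤ ι g x)
    (hind : ∀ (f : Y) (A : Set Ω), ∃ g : Y, ∀ x, ι g x = Set.indicator A (ι f) x) (a b : Y) :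
    ι (a ⊓ b) = ι a ⊓ ι b := by
  have hmono : Monotone ι := fun f g h x => (horder f g).1 h x
  refine le_antisymm (le_inf (hmono inf_le_left) (hmono inf_le_right)) ?_
  -- glue `a` on the set where `ι a ≤ ι b` and `b` on its complement
  set A := {x | ι a x ≤ ι b x}
  obtain ⟨a', ha'⟩ := hind a A
  obtain ⟨b', hb'⟩ := hind b Aᶜ
  have hmin : ∀ x, ι (a' + b') x = min (ι a x) (ι b x) := by
    intro x
    by_cases hx : x ∈ A
    · simp [ha', hb', hx, min_eq_left (show ι a x ≤ ι b x from hx)]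
    · simp [ha', hb', hx, min_eq_right (not_le.1 (show ¬ι a x ≤ ι b x from hx)).le]
  have hle : a' + b' ≤ a ⊓ b :=
    le_inf ((horder _ _).2 fun x => (hmin x).trans_le (min_le_left _ _))
      ((horder _ _).2 fun x => (hmin x).trans_le (min_le_right _ _))
  intro x
  exact (hmin x).symm.le.trans ((horder _ _).1 hle x)

end FunctionLattice

theorem disjoint_support_of_inf_eq_zero {Ω : Type*} {f g : Ω → ℝ} (h : f ⊓ g = 0) :
    Disjoint (support f) (support g) := by
  refine Set.disjoint_left.2 fun x hf hg => ?_
  have hx : min (f x) (g x) = 0 := congrFun h x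
  rcases min_choice (f x) (g x) with h' | h' <;> rw [h'] at hx
  exacts [hf hx, hg hx]

theorem abs_sub_add_inf_add_inf {α : Type*} [Lattice α] [AddCommGroup α] [AddLeftMono α]
    (a b : α) : |a - b| + (a ⊓ b + a ⊓ b) = a + b := by
  rw [abs_sub_comm, ← sup_sub_inf_eq_abs_sub, ← inf_add_sup a b]
  abel

theorem norm_inv_smul_sub_add_le {E : Type*} [SeminormedAddCommGroup E] [NormedSpace ℝ E]
    {u : ℝ} (hu0 : 0 < u) (hu1 : u ≤ 1) {p : E} (hp : ‖p‖ ≤ u) (g : E) :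
    ‖u⁻¹ • p - (g + p)‖ ≤ 1 - u + ‖g‖ := by
  have hu : 0 ≤ u⁻¹ - 1 := sub_nonneg.2 (one_le_inv₀ hu0 |>.2 hu1)
  calc ‖u⁻¹ • p - (g + p)‖ = ‖(u⁻¹ - 1) • p - g‖ := by
        rw [sub_smul, one_smul]; congr 1; abel
    _ ≤ (u⁻¹ - 1) * ‖p‖ + ‖g‖ := by
        refine (norm_sub_le _ _).trans_eq ?_
        rw [norm_smul, Real.norm_of_nonneg hu]
    _ ≤ (u⁻¹ - 1) * u + ‖g‖ := by gcongr
    _ = 1 - u + ‖g‖ := by field_simp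

section NormedLattice

variable {Y : Type*} [NormedAddCommGroup Y] [Lattice Y] [HasSolidNorm Y] [IsOrderedAddMonoid Y]

theorem norm_sub_le_norm_add_of_nonneg {a b : Y} (ha : 0 ≤ a) (hb : 0 ≤ b) :
    ‖a - b‖ ≤ ‖a + b‖ := by
  refine norm_le_norm_of_abs_le_abs ?_
  calc |a - b| ≤ |a| + |b| := by simpa only [sub_eq_add_neg, abs_neg] using abs_add_le a (-b)
    _ = |a + b| := by rw [abs_of_nonneg ha, abs_of_nonneg hb, abs_of_nonneg (add_nonneg ha hb)]

theorem norm_posPart_le (a : Y) : ‖a⁺‖ ≤ ‖a‖ := by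
  refine norm_le_norm_of_abs_le_abs ?_
  rw [abs_of_nonneg (posPart_nonneg a), ← posPart_add_negPart]
  exact le_add_of_nonneg_right (negPart_nonneg a)

theorem norm_negPart_le (a : Y) : ‖a⁻‖ ≤ ‖a‖ := by
  simpa only [posPart_neg, norm_neg] using norm_posPart_le (-a)

end NormedLattice

theorem norm_le_mul_norm_of_uniformlyMonotone {Y : Type*} [SeminormedAddCommGroup Y]
    [NormedSpace ℝ Y] [Preorder Y] [PosSMulMono ℝ Y] {d e : ℝ}
    (hUM : ∀ x y : Y, 0 ≤ x → 0 ≤ y → ‖x‖ = 1 → ‖x + y‖ ≤ 1 + d → ‖y‖ ≤ e)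
    (hd : 0 < 1 + d) {x y : Y} (hx : 0 ≤ x) (hy : 0 ≤ y) (hxy : ‖x + y‖ ≤ 1)
    (hx1 : 1 / (1 + d) ≤ ‖x‖) : ‖y‖ ≤ e * ‖x‖ := by
  have hr : 0 < ‖x‖ := (one_div_pos.2 hd).trans_le hx1
  have hr' : 0 ≤ ‖x‖⁻¹ := inv_nonneg.2 hr.le
  have hscaled := hUM (‖x‖⁻¹ • x) (‖x‖⁻¹ • y) (smul_nonneg hr' hx) (smul_nonneg hr' hy)
    (by rw [norm_smul, Real.norm_of_nonneg hr', inv_mul_cancel₀ hr.ne'])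
    (by
      rw [← smul_add, norm_smul, Real.norm_of_nonneg hr']
      calc ‖x‖⁻¹ * ‖x + y‖ ≤ ‖x‖⁻¹ := mul_le_of_le_one_right hr' hxy
        _ ≤ 1 + d := by rwa [inv_le_comm₀ hr hd, ← one_div])
  rwa [norm_smul, Real.norm_of_nonneg hr', inv_mul_le_iff₀ hr, mul_comm] at hscaled

theorem stmt_16_general {Ω : Type*}
    {Y : Type*} [NormedAddCommGroup Y] [Lattice Y] [HasSolidNorm Y]
    [IsOrderedAddMonoid Y] [NormedSpace ℝ Y]
    (ι : Y →ₗ[ℝ] (Ω → ℝ))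
    (horder : ∀ f g : Y, f ≤ g ↔ ∀ x, ι f x ≤ ι g x)
    (hind : ∀ (f : Y) (A : Set Ω), ∃ g : Y, ∀ x, ι g x = Set.indicator A (ι f) x)
    (δ : ℝ → ℝ)
    (hδ : ∀ e : ℝ, 0 < e → e < 1 → 0 < δ e ∧ δ e ≤ e ∧
      ∀ x y : Y, 0 ≤ x → 0 ≤ y → ‖x‖ = 1 → ‖x + y‖ ≤ 1 + δ e → ‖y‖ ≤ e)
    (ε : ℝ) (hε0 : 0 < ε) (hε1 : ε < 1)
    (f₁ f₂ : Y) (hf₁ : 0 ≤ f₁) (hf₂ : 0 ≤ f₂)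
    (hsum : ‖f₁ + f₂‖ ≤ 1) (hdiff : 1 / (1 + δ (ε / 3)) ≤ ‖f₁ - f₂‖) :
    ∃ h₁ h₂ : Y, 0 ≤ h₁ ∧ 0 ≤ h₂ ∧
      Disjoint (Function.support (ι h₁)) (Function.support (ι h₂)) ∧
      ‖h₁ + h₂‖ = 1 ∧ ‖h₁ - f₁‖ < ε ∧ ‖h₂ - f₂‖ < ε := by
  obtain ⟨hd0, hdε, hUM⟩ := hδ (ε / 3) (by linarith) (by linarith)
  have := posSMulMono_of_le_iff ι horder
  set d := δ (ε / 3)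
  set F := f₁ - f₂
  set u := ‖F‖
  have hu1 : u ≤ 1 := (norm_sub_le_norm_add_of_nonneg hf₁ hf₂).trans hsum
  have hu0 : 0 < u := (one_div_pos.2 (by linarith)).trans_le hdiff
  have hdefect : 1 - u ≤ ε / 3 := by
    have : 1 - d ≤ 1 / (1 + d) := by rw [le_div_iff₀ (by linarith)]; nlinarith
    linarith
  -- `f₁ + f₂ = |F| + 2 (f₁ ⊓ f₂)` and `‖|F|‖` is already close to `1`
  have hinf : ‖f₁ ⊓ f₂‖ ≤ ε / 6 := by
    have hg := le_inf hf₁ hf₂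
    have := norm_le_mul_norm_of_uniformlyMonotone hUM (by linarith) (abs_nonneg F)
      (add_nonneg hg hg) (by rwa [abs_sub_add_inf_add_inf]) (by rwa [norm_abs_eq_norm])
    rw [← two_smul ℝ, norm_smul, Real.norm_two, norm_abs_eq_norm] at this
    nlinarith
  have hu' : 0 ≤ u⁻¹ := inv_nonneg.2 hu0.le
  refine ⟨u⁻¹ • F⁺, u⁻¹ • F⁻, smul_nonneg hu' (posPart_nonneg F),
    smul_nonneg hu' (negPart_nonneg F), ?_, ?_, ?_, ?_⟩
  · have hparts : ι F⁺ ⊓ ι F⁻ = 0 := by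
      rw [← map_inf_of_le_iff_of_indicator ι horder hind, posPart_inf_negPart_eq_zero, map_zero]
    simp only [map_smul]
    exact (disjoint_support_of_inf_eq_zero hparts).mono (support_const_smul_subset _ _)
      (support_const_smul_subset _ _)
  · rw [← smul_add, posPart_add_negPart, norm_smul, norm_abs_eq_norm, Real.norm_of_nonneg hu',
      inv_mul_cancel₀ hu0.ne']
  · calc ‖u⁻¹ • F⁺ - f₁‖ = ‖u⁻¹ • F⁺ - (f₁ ⊓ f₂ + F⁺)‖ := by
          rw [inf_eq_sub_posPart_sub, sub_add_cancel]
      _ ≤ 1 - u + ‖f₁ ⊓ f₂‖ := norm_inv_smul_sub_add_le hu0 hu1 (norm_posPart_le F) _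
      _ < ε := by linarith
  · calc ‖u⁻¹ • F⁻ - f₂‖ = ‖u⁻¹ • F⁻ - (f₁ ⊓ f₂ + F⁻)‖ := by
          rw [inf_comm, inf_eq_sub_posPart_sub, ← neg_sub f₁ f₂, posPart_neg, sub_add_cancel]
      _ ≤ 1 - u + ‖f₁ ⊓ f₂‖ := norm_inv_smul_sub_add_le hu0 hu1 (norm_negPart_le F) _
      _ < ε := by linarith

/-- Lemma 2.4: in a uniformly monotone Banach function space `Y` (modelled by a linear embedding
`ι` into functions on `Ω`), nonnegative `f₁, f₂` with `‖f₁ + f₂‖ ≤ 1` and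
`‖f₁ - f₂‖ ≥ 1/(1 + δ(ε/3))` can be approximated within `ε` by nonnegative `h₁, h₂` with
disjoint supports and `‖h₁ + h₂‖ = 1`. -/
theorem stmt_16 {Ω : Type*} [MeasurableSpace Ω] (μ : MeasureTheory.Measure Ω)
    {Y : Type*} [NormedAddCommGroup Y] [Lattice Y] [HasSolidNorm Y]
    [IsOrderedAddMonoid Y] [NormedSpace ℝ Y] [CompleteSpace Y]
    (ι : Y →ₗ[ℝ] (Ω → ℝ))
    (hnorm : ∀ f g : Y, (∀ x, |ι f x| = |ι g x|) → ‖f‖ = ‖g‖)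
    (horder : ∀ f g : Y, f ≤ g ↔ ∀ x, ι f x ≤ ι g x)
    (hind : ∀ (f : Y) (A : Set Ω), ∃ g : Y, ∀ x, ι g x = Set.indicator A (ι f) x)
    (δ : ℝ → ℝ)
    (hδ : ∀ e : ℝ, 0 < e → e < 1 → 0 < δ e ∧ δ e ≤ e ∧
      ∀ x y : Y, 0 ≤ x → 0 ≤ y → ‖x‖ = 1 → ‖x + y‖ ≤ 1 + δ e → ‖y‖ ≤ e)
    (ε : ℝ) (hε0 : 0 < ε) (hε1 : ε < 1)
    (f₁ f₂ : Y) (hf₁ : 0 ≤ f₁) (hf₂ : 0 ≤ f₂)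
    (hsum : ‖f₁ + f₂‖ ≤ 1) (hdiff : 1 / (1 + δ (ε / 3)) ≤ ‖f₁ - f₂‖) :
    ∃ h₁ h₂ : Y, 0 ≤ h₁ ∧ 0 ≤ h₂ ∧
      Disjoint (Function.support (ι h₁)) (Function.support (ι h₂)) ∧
      ‖h₁ + h₂‖ = 1 ∧ ‖h₁ - f₁‖ < ε ∧ ‖h₂ - f₂‖ < ε :=
  stmt_16_general ι horder hind δ hδ ε hε0 hε1 f₁ f₂ hf₁ hf₂ hsum hdiff
end
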